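/- Let T > 0, let η ≥ 0 and ζ ≥ 0, let Λ be the isotropic viscosity 4-tensor with coefficients η, ζ, and let κ and D be symmetric positive semidefinite real 3×3 matrices. Then for every real 3×3 matrix A (the velocity gradient ∇v) and all vectors g, h ∈ ℝ³ (the gradients ∇T and ∇μ), the local entropy production rate is non-negative: (1/T)·[ Σ_{i,j,k,l} A_{ij} Λ_{ijkl} A_{kl} + (1/T)·gᵀκg + hᵀDh ] ≥ 0. -/
import Mathlib


/-- The isotropic viscosity 4-tensor
`Λ_{ijkl} = η(δ_{il}δ_{jk} + δ_{jl}δ_{ik} − (2/3)δ_{ij}δ_{kl}) + ζ δ_{ij}δ_{kl}`. -/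
noncomputable def viscTensor (η ζ : ℝ) (i j k l : Fin 3) : ℝ :=
  η * ((if i = l then (1 : ℝ) else 0) * (if j = k then (1 : ℝ) else 0)
      + (if j = l then (1 : ℝ) else 0) * (if i = k then (1 : ℝ) else 0)
      - 2 / 3 * ((if i = j then (1 : ℝ) else 0) * (if k = l then (1 : ℝ) else 0)))
    + ζ * ((if i = j then (1 : ℝ) else 0) * (if k = l then (1 : ℝ) else 0))

set_option maxHeartbeats 1000000 in
lemma visc_nonneg (η ζ : ℝ) (hη : 0 ≤ η) (hζ : 0 ≤ ζ)
    (A : Matrix (Fin 3) (Fin 3) ℝ) :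
    0 ≤ ∑ i, ∑ j, ∑ k, ∑ l, A i j * viscTensor η ζ i j k l * A k l := by
  have key : (∑ i, ∑ j, ∑ k, ∑ l, A i j * viscTensor η ζ i j k l * A k l)
      = η * ((A 0 1 + A 1 0)^2 + (A 0 2 + A 2 0)^2 + (A 1 2 + A 2 1)^2
          + 2/3 * ((A 0 0 - A 1 1)^2 + (A 1 1 - A 2 2)^2 + (A 0 0 - A 2 2)^2))
        + ζ * (A 0 0 + A 1 1 + A 2 2)^2 := by
    simp only [viscTensor, Fin.sum_univ_three, Fin.reduceEq, if_true, if_false, reduceIte,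
      ite_self, one_ne_zero, mul_zero, zero_mul, mul_one, one_mul, add_zero, zero_add, sub_zero]
    ring
  rw [key]
  positivity

set_option maxHeartbeats 1000000 in
/-- nonnegativity of the local entropy production rate
`(1/T)[∇v:Λ:∇v + (1/T)∇T·κ·∇T + ∇μ·D·∇μ]` of the Gibbs–Navier–Stokes system, for `T > 0`,
viscosity coefficients `η, ζ ≥ 0`, and symmetric positive semidefinite `κ`, `D`. -/
theorem entropy_production_nonneg
    (T η ζ : ℝ) (hT : 0 < T) (hη : 0 ≤ η) (hζ : 0 ≤ ζ)
    (κ D : Matrix (Fin 3) (Fin 3) ℝ)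
    (hκsymm : κ.IsSymm) (hDsymm : D.IsSymm)
    (hκpsd : ∀ x : Fin 3 → ℝ, 0 ≤ ∑ j, ∑ k, x j * κ j k * x k)
    (hDpsd : ∀ x : Fin 3 → ℝ, 0 ≤ ∑ j, ∑ k, x j * D j k * x k)
    (A : Matrix (Fin 3) (Fin 3) ℝ) (g h : Fin 3 → ℝ) :
    0 ≤ (1 / T) * ((∑ i, ∑ j, ∑ k, ∑ l, A i j * viscTensor η ζ i j k l * A k l)
          + (1 / T) * (∑ j, ∑ k, g j * κ j k * g k)
          + ∑ j, ∑ k, h j * D j k * h k) := by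
  have h1 := visc_nonneg η ζ hη hζ A
  have h2 := hκpsd g
  have h3 := hDpsd h
  have hTinv : 0 ≤ 1 / T := by positivity
  have := mul_nonneg hTinv h2
  positivity
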